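/- Let b = (bₖ)ₖ≥₀ be a sequence of positive integers such that the continued fraction value [b₀; b₁, b₂, …] satisfies [b] ≥ [Tᵏb] for every k ≥ 0, where Tᵏb = (b_k, b_{k+1}, …). If [2; 1,2,1,2,…] ≤ [b₀; b₁, …] ≤ [3; 3,3,…], then [b₀; b₁, …] equals either [2; 1,2,1,2,…] = 1+√3 or [3; 3,3,…] = (3+√13)/2. -/

import Mathlib

open Filter

/-- Numerators of the convergents of the continued fraction `[b₀; b₁, b₂, …]`. -/
def cfNum (b : ℕ → ℕ) : ℕ → ℝ
  | 0 => b 0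
  | 1 => b 1 * b 0 + 1
  | (n + 2) => b (n + 2) * cfNum b (n + 1) + cfNum b n

/-- Denominators of the convergents of the continued fraction `[b₀; b₁, b₂, …]`. -/
def cfDen (b : ℕ → ℕ) : ℕ → ℝ
  | 0 => 1
  | 1 => b 1
  | (n + 2) => b (n + 2) * cfDen b (n + 1) + cfDen b n

/-- The value of the infinite continued fraction `[b₀; b₁, b₂, …]`, as the limit of its
convergents (well defined when all partial quotients are positive). -/
noncomputable def cfVal (b : ℕ → ℕ) : ℝ :=
  limUnder atTop (fun n => cfNum b n / cfDen b n)

namespace CFaux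

lemma den_one_le (b : ℕ → ℕ) (hb : ∀ k, 1 ≤ b k) : ∀ n, (1 : ℝ) ≤ cfDen b n := by
  intro n
  induction n using Nat.twoStepInduction with
  | zero => simp [cfDen]
  | one => simpa [cfDen] using (Nat.one_le_cast (α := ℝ)).mpr (hb 1)
  | more n ih1 ih2 =>
      have hbn : (1 : ℝ) ≤ (b (n + 2) : ℝ) := Nat.one_le_cast.mpr (hb (n + 2))
      show (b (n + 2) : ℝ) * cfDen b (n + 1) + cfDen b n ≥ 1
      nlinarith

lemma den_mono (b : ℕ → ℕ) (hb : ∀ k, 1 ≤ b k) : ∀ n, cfDen b n ≤ cfDen b (n + 1) := by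
  intro n
  induction n using Nat.twoStepInduction with
  | zero => simpa [cfDen] using (Nat.one_le_cast (α := ℝ)).mpr (hb 1)
  | one =>
      have h0 := den_one_le b hb 0
      have h1 := den_one_le b hb 1
      have hbn : (1 : ℝ) ≤ (b 2 : ℝ) := Nat.one_le_cast.mpr (hb 2)
      show cfDen b 1 ≤ (b 2 : ℝ) * cfDen b 1 + cfDen b 0
      nlinarith
  | more n ih1 ih2 =>
      have h1 := den_one_le b hb (n + 1)
      have h2 := den_one_le b hb (n + 2)
      have hbn : (1 : ℝ) ≤ (b (n + 3) : ℝ) := Nat.one_le_cast.mpr (hb (n + 3))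
      show cfDen b (n + 2) ≤ (b (n + 3) : ℝ) * cfDen b (n + 2) + cfDen b (n + 1)
      nlinarith

lemma den_prod (b : ℕ → ℕ) (hb : ∀ k, 1 ≤ b k) :
    ∀ n, (2 : ℝ) ^ n ≤ 2 * (cfDen b n * cfDen b (n + 1)) := by
  intro n
  induction n with
  | zero =>
      have h1 := den_one_le b hb 1
      have h0 : cfDen b 0 = 1 := rfl
      rw [h0]
      nlinarith
  | succ n ih =>
      have h1 := den_one_le b hb n
      have h2 := den_one_le b hb (n + 1)
      have hm := den_mono b hb n
      have hbn : (1 : ℝ) ≤ (b (n + 2) : ℝ) := Nat.one_le_cast.mpr (hb (n + 2))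
      have hstep : cfDen b (n + 2) = (b (n + 2) : ℝ) * cfDen b (n + 1) + cfDen b n := rfl
      have : 2 * (cfDen b n * cfDen b (n + 1)) ≤ cfDen b (n + 1) * cfDen b (n + 2) := by
        have hd1pos : (0 : ℝ) ≤ cfDen b (n + 1) := by linarith
        have k1 : cfDen b n * cfDen b (n + 1) ≤ cfDen b (n + 1) * cfDen b (n + 1) :=
          mul_le_mul_of_nonneg_right hm hd1pos
        have k2 : cfDen b (n + 1) * cfDen b (n + 1) ≤
            (b (n + 2) : ℝ) * (cfDen b (n + 1) * cfDen b (n + 1)) :=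
          le_mul_of_one_le_left (by nlinarith) hbn
        rw [hstep]; nlinarith [k1, k2]
      calc (2 : ℝ) ^ (n + 1) = 2 * 2 ^ n := by ring
        _ ≤ 2 * (2 * (cfDen b n * cfDen b (n + 1))) := by linarith
        _ ≤ 2 * (cfDen b (n + 1) * cfDen b (n + 2)) := by linarith

lemma num_ge_den (b : ℕ → ℕ) (hb : ∀ k, 1 ≤ b k) : ∀ n, cfDen b n ≤ cfNum b n := by
  intro n
  induction n using Nat.twoStepInduction with
  | zero => simpa [cfNum, cfDen] using (Nat.one_le_cast (α := ℝ)).mpr (hb 0)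
  | one =>
      have hb0 : (1 : ℝ) ≤ (b 0 : ℝ) := Nat.one_le_cast.mpr (hb 0)
      have hb1 : (1 : ℝ) ≤ (b 1 : ℝ) := Nat.one_le_cast.mpr (hb 1)
      show (b 1 : ℝ) ≤ (b 1 : ℝ) * (b 0 : ℝ) + 1
      nlinarith
  | more n ih1 ih2 =>
      have hbn : (0 : ℝ) ≤ (b (n + 2) : ℝ) := Nat.cast_nonneg _
      show (b (n + 2) : ℝ) * cfDen b (n + 1) + cfDen b n ≤
        (b (n + 2) : ℝ) * cfNum b (n + 1) + cfNum b n
      nlinarith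

lemma det (b : ℕ → ℕ) :
    ∀ n, cfNum b (n + 1) * cfDen b n - cfNum b n * cfDen b (n + 1) = (-1 : ℝ) ^ n := by
  intro n
  induction n with
  | zero =>
      show cfNum b 1 * cfDen b 0 - cfNum b 0 * cfDen b 1 = 1
      show ((b 1 : ℝ) * (b 0 : ℝ) + 1) * 1 - (b 0 : ℝ) * (b 1 : ℝ) = 1
      ring
  | succ n ih =>
      have hN : cfNum b (n + 2) = (b (n + 2) : ℝ) * cfNum b (n + 1) + cfNum b n := rfl
      have hD : cfDen b (n + 2) = (b (n + 2) : ℝ) * cfDen b (n + 1) + cfDen b n := rfl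
      rw [hN, hD]
      have : (-1 : ℝ) ^ (n + 1) = -(-1 : ℝ) ^ n := by ring
      rw [this, ← ih]; ring

lemma conv_ge_one (b : ℕ → ℕ) (hb : ∀ k, 1 ≤ b k) (n : ℕ) :
    (1 : ℝ) ≤ cfNum b n / cfDen b n := by
  have h1 := den_one_le b hb n
  have h2 := num_ge_den b hb n
  rw [le_div_iff₀ (by linarith)]
  linarith

lemma cauchy (b : ℕ → ℕ) (hb : ∀ k, 1 ≤ b k) :
    CauchySeq (fun n => cfNum b n / cfDen b n) := by
  apply cauchySeq_of_dist_le_of_summable (fun n => 2 * (1 / 2 : ℝ) ^ n)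
  · intro n
    have h1 := den_one_le b hb n
    have h2 := den_one_le b hb (n + 1)
    have hd := det b n
    have hp := den_prod b hb n
    have hpos : (0 : ℝ) < cfDen b n * cfDen b (n + 1) := by nlinarith
    have : dist (cfNum b n / cfDen b n) (cfNum b (n + 1) / cfDen b (n + 1)) =
        |cfNum b n * cfDen b (n + 1) - cfDen b n * cfNum b (n + 1)| /
          (cfDen b n * cfDen b (n + 1)) := by
      rw [Real.dist_eq, div_sub_div _ _ (by linarith) (by linarith), abs_div,
        abs_of_pos hpos]
    rw [Nat.succ_eq_add_one, this]
    have habs : |cfNum b n * cfDen b (n + 1) - cfDen b n * cfNum b (n + 1)| = 1 := by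
      have : cfNum b n * cfDen b (n + 1) - cfDen b n * cfNum b (n + 1) = -(-1 : ℝ) ^ n := by
        rw [← hd]; ring
      rw [this, abs_neg, abs_pow, abs_neg, abs_one, one_pow]
    rw [habs]
    rw [div_le_iff₀ hpos]
    have h2n : (0 : ℝ) < 2 ^ n := by positivity
    have : (2 : ℝ) * (1 / 2) ^ n = 2 / 2 ^ n := by
      rw [div_pow, one_pow]; ring
    rw [this, div_mul_eq_mul_div, le_div_iff₀ h2n]
    nlinarith
  · exact (summable_geometric_of_lt_one (by norm_num) (by norm_num)).mul_left 2

lemma tendsto_cfVal (b : ℕ → ℕ) (hb : ∀ k, 1 ≤ b k) :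
    Tendsto (fun n => cfNum b n / cfDen b n) atTop (nhds (cfVal b)) :=
  tendsto_nhds_limUnder (cauchySeq_tendsto_of_complete (cauchy b hb))

lemma one_le_cfVal (b : ℕ → ℕ) (hb : ∀ k, 1 ≤ b k) : (1 : ℝ) ≤ cfVal b :=
  ge_of_tendsto' (tendsto_cfVal b hb) (conv_ge_one b hb)

lemma shift_convergents (b : ℕ → ℕ) : ∀ n,
    cfNum b (n + 1) = (b 0 : ℝ) * cfNum (fun i => b (1 + i)) n + cfDen (fun i => b (1 + i)) n ∧
    cfDen b (n + 1) = cfNum (fun i => b (1 + i)) n := by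
  intro n
  induction n using Nat.twoStepInduction with
  | zero => constructor <;> simp [cfNum, cfDen] <;> ring
  | one =>
      constructor
      · show (b 2 : ℝ) * cfNum b 1 + cfNum b 0 =
          (b 0 : ℝ) * ((b (1 + 1) : ℝ) * (b (1 + 0) : ℝ) + 1) + (b (1 + 1) : ℝ)
        show (b 2 : ℝ) * ((b 1 : ℝ) * (b 0 : ℝ) + 1) + (b 0 : ℝ) =
          (b 0 : ℝ) * ((b 2 : ℝ) * (b 1 : ℝ) + 1) + (b 2 : ℝ)
        ring
      · show (b 2 : ℝ) * cfDen b 1 + cfDen b 0 = (b (1 + 1) : ℝ) * (b (1 + 0) : ℝ) + 1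
        show (b 2 : ℝ) * (b 1 : ℝ) + 1 = (b 2 : ℝ) * (b 1 : ℝ) + 1
        rfl
  | more n ih1 ih2 =>
      obtain ⟨h1N, h1D⟩ := ih1
      obtain ⟨h2N, h2D⟩ := ih2
      have hcoef : ((fun i => b (1 + i)) (n + 2) : ℝ) = (b (n + 3) : ℝ) := by
        norm_num; congr 1; omega
      constructor
      · show (b (n + 3) : ℝ) * cfNum b (n + 2) + cfNum b (n + 1) =
          (b 0 : ℝ) * (((fun i => b (1 + i)) (n + 2) : ℝ) * cfNum (fun i => b (1 + i)) (n + 1)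
            + cfNum (fun i => b (1 + i)) n) +
          (((fun i => b (1 + i)) (n + 2) : ℝ) * cfDen (fun i => b (1 + i)) (n + 1)
            + cfDen (fun i => b (1 + i)) n)
        rw [hcoef, h1N, h2N, ← h1D, ← h2D]; ring
      · show (b (n + 3) : ℝ) * cfDen b (n + 2) + cfDen b (n + 1) =
          ((fun i => b (1 + i)) (n + 2) : ℝ) * cfNum (fun i => b (1 + i)) (n + 1)
            + cfNum (fun i => b (1 + i)) n
        rw [hcoef, h2D, h1D]

lemma cfVal_rec (b : ℕ → ℕ) (hb : ∀ k, 1 ≤ b k) :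
    cfVal b = (b 0 : ℝ) + 1 / cfVal (fun i => b (1 + i)) := by
  set c : ℕ → ℕ := fun i => b (1 + i) with hc
  have hbc : ∀ k, 1 ≤ c k := fun k => hb (1 + k)
  have hL : (1 : ℝ) ≤ cfVal c := one_le_cfVal c hbc
  have hLne : cfVal c ≠ 0 := by linarith
  have htc : Tendsto (fun n => cfNum c n / cfDen c n) atTop (nhds (cfVal c)) :=
    tendsto_cfVal c hbc
  have key : ∀ n, cfNum b (n + 1) / cfDen b (n + 1) =
      (b 0 : ℝ) + 1 / (cfNum c n / cfDen c n) := by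
    intro n
    obtain ⟨hN, hD⟩ := shift_convergents b n
    have hden1 := den_one_le c hbc n
    have hnum1 : (1 : ℝ) ≤ cfNum c n := le_trans hden1 (num_ge_den c hbc n)
    have hPne : cfNum c n ≠ 0 := by linarith
    rw [← hc] at hN hD
    rw [hN, hD, one_div_div]
    field_simp
  have h2 : Tendsto (fun n => cfNum b (n + 1) / cfDen b (n + 1)) atTop
      (nhds ((b 0 : ℝ) + 1 / cfVal c)) := by
    have : Tendsto (fun n => (b 0 : ℝ) + 1 / (cfNum c n / cfDen c n)) atTop
        (nhds ((b 0 : ℝ) + 1 / cfVal c)) := by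
      have := htc.inv₀ hLne
      simpa [one_div] using this.const_add ((b 0 : ℝ))
    exact this.congr (fun n => (key n).symm)
  have h3 : Tendsto (fun n => cfNum b n / cfDen b n) atTop
      (nhds ((b 0 : ℝ) + 1 / cfVal c)) :=
    (tendsto_add_atTop_iff_nat 1).mp h2
  exact tendsto_nhds_unique (tendsto_cfVal b hb) h3

lemma cfVal_rec' (b c : ℕ → ℕ) (hb : ∀ k, 1 ≤ b k) (hcb : ∀ i, c i = b (1 + i)) :
    cfVal b = (b 0 : ℝ) + 1 / cfVal c := by
  have : c = fun i => b (1 + i) := funext hcb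
  rw [this]
  exact cfVal_rec b hb

lemma val_three : cfVal (fun _ => 3) = (3 + Real.sqrt 13) / 2 := by
  have hb : ∀ k, 1 ≤ (fun _ => 3 : ℕ → ℕ) k := fun _ => by norm_num
  have hrec := cfVal_rec' (fun _ => 3) (fun _ => 3) hb (fun i => rfl)
  have h1 : (1 : ℝ) ≤ cfVal (fun _ => 3) := one_le_cfVal _ hb
  set v := cfVal (fun _ => 3 : ℕ → ℕ) with hv
  have hrec' : v = 3 + 1 / v := by
    have hc : ((fun _ => (3 : ℕ)) 0 : ℝ) = 3 := by norm_num
    rw [hc] at hrec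
    exact hrec
  have hvpos : (0 : ℝ) < v := by linarith
  have hquad : v * v = 3 * v + 1 := by
    have := hrec'
    field_simp at this
    linarith
  have hs : Real.sqrt 13 ^ 2 = 13 := Real.sq_sqrt (by norm_num)
  have hs3 : (3 : ℝ) ≤ Real.sqrt 13 := by nlinarith [Real.sqrt_nonneg 13]
  have hfac : (2 * v - 3 - Real.sqrt 13) * (2 * v - 3 + Real.sqrt 13) = 0 := by
    linear_combination 4 * hquad - hs
  rcases mul_eq_zero.mp hfac with h | h
  · linarith
  · exfalso; linarith

lemma val_low :
    cfVal (fun n => if n = 0 then 2 else if n % 2 = 1 then 1 else 2) = 1 + Real.sqrt 3 := by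
  set L : ℕ → ℕ := fun n => if n = 0 then 2 else if n % 2 = 1 then 1 else 2 with hL
  have hbL : ∀ k, 1 ≤ L k := by
    intro k
    show 1 ≤ (if k = 0 then 2 else if k % 2 = 1 then 1 else 2)
    split_ifs <;> omega
  set TL : ℕ → ℕ := fun i => L (1 + i) with hTL
  have hbTL : ∀ k, 1 ≤ TL k := fun k => hbL _
  have hrec1 := cfVal_rec' L TL hbL (fun i => rfl)
  have hrec2 := cfVal_rec' TL L hbTL (fun i => by
    show (if i = 0 then 2 else if i % 2 = 1 then 1 else 2) =
      (if 1 + (1 + i) = 0 then 2 else if (1 + (1 + i)) % 2 = 1 then 1 else 2)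
    split_ifs <;> omega)
  have hL0 : ((L 0 : ℕ) : ℝ) = 2 := by
    show (((if (0:ℕ) = 0 then 2 else if (0:ℕ) % 2 = 1 then 1 else 2) : ℕ) : ℝ) = 2
    norm_num
  have hTL0 : ((TL 0 : ℕ) : ℝ) = 1 := by
    show (((if (1:ℕ) = 0 then 2 else if (1:ℕ) % 2 = 1 then 1 else 2) : ℕ) : ℝ) = 1
    norm_num
  rw [hL0] at hrec1
  rw [hTL0] at hrec2
  have hvL : (1 : ℝ) ≤ cfVal L := one_le_cfVal _ hbL
  have hvTL : (1 : ℝ) ≤ cfVal TL := one_le_cfVal _ hbTL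
  set v := cfVal L with hv
  set x := cfVal TL with hxd
  have hvpos : (0 : ℝ) < v := by linarith
  have hxpos : (0 : ℝ) < x := by linarith
  have e1 : x * v = v + 1 := by
    rw [hrec2, add_mul, one_mul, one_div, inv_mul_cancel₀ (ne_of_gt hvpos)]
  have e2 : v * x = 2 * x + 1 := by
    rw [hrec1, add_mul, one_div, inv_mul_cancel₀ (ne_of_gt hxpos)]
  have e2' : x * v = 2 * x + 1 := by rw [mul_comm] at e2; exact e2
  have hv2x : v = 2 * x := by linarith
  have hquad : v * v = 2 * v + 2 := by linear_combination 2 * e1 + v * hv2x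
  have hs : Real.sqrt 3 ^ 2 = 3 := Real.sq_sqrt (by norm_num)
  have hs1 : (1 : ℝ) ≤ Real.sqrt 3 := by nlinarith [Real.sqrt_nonneg 3]
  have hfac : (v - 1 - Real.sqrt 3) * (v - 1 + Real.sqrt 3) = 0 := by
    linear_combination hquad - hs
  rcases mul_eq_zero.mp hfac with h | h
  · linarith
  · exfalso; linarith


end CFaux

set_option maxHeartbeats 1600000 in
theorem stmt18 (b : ℕ → ℕ) (hb : ∀ k, 1 ≤ b k)
    (hdom : ∀ k, cfVal (fun i => b (k + i)) ≤ cfVal b)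
    (hlow : cfVal (fun n => if n = 0 then 2 else if n % 2 = 1 then 1 else 2) ≤ cfVal b)
    (hhigh : cfVal b ≤ cfVal (fun _ => 3)) :
    cfVal b = 1 + Real.sqrt 3 ∨ cfVal b = (3 + Real.sqrt 13) / 2 := by
  rw [CFaux.val_low] at hlow
  rw [CFaux.val_three] at hhigh
  have hs3 : Real.sqrt 3 ^ 2 = 3 := Real.sq_sqrt (by norm_num)
  have hs3_1 : (1 : ℝ) ≤ Real.sqrt 3 := by nlinarith [Real.sqrt_nonneg 3]
  have hs3_2 : Real.sqrt 3 ≤ 2 := by nlinarith [Real.sqrt_nonneg 3]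
  have hs13 : Real.sqrt 13 ^ 2 = 13 := Real.sq_sqrt (by norm_num)
  have hs13_3 : (3 : ℝ) ≤ Real.sqrt 13 := by nlinarith [Real.sqrt_nonneg 13]
  have hs13_4 : Real.sqrt 13 ≤ 4 := by nlinarith [Real.sqrt_nonneg 13]
  have hb1 : ∀ k, 1 ≤ (fun i => b (1 + i)) k := fun k => hb _
  have hb2 : ∀ k, 1 ≤ (fun i => b (2 + i)) k := fun k => hb _
  have hrec1 : cfVal b = (b 0 : ℝ) + 1 / cfVal (fun i => b (1 + i)) :=
    CFaux.cfVal_rec' b (fun i => b (1 + i)) hb (fun i => rfl)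
  have hrec2 : cfVal (fun i => b (1 + i)) = (b 1 : ℝ) + 1 / cfVal (fun i => b (2 + i)) :=
    CFaux.cfVal_rec' (fun i => b (1 + i)) (fun i => b (2 + i)) hb1
      (fun i => by show b (2 + i) = b (1 + (1 + i)); congr 1; omega)
  set v := cfVal b with hvd
  set x := cfVal (fun i => b (1 + i)) with hxd
  set y := cfVal (fun i => b (2 + i)) with hyd
  have hx1 : (1 : ℝ) ≤ x := CFaux.one_le_cfVal _ hb1
  have hy1 : (1 : ℝ) ≤ y := CFaux.one_le_cfVal _ hb2
  have hv1 : (1 : ℝ) ≤ v := CFaux.one_le_cfVal _ hb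
  have hxv : x ≤ v := hdom 1
  have hyv : y ≤ v := hdom 2
  clear_value v x y
  have hxpos : (0 : ℝ) < x := by linarith
  have hypos : (0 : ℝ) < y := by linarith
  have hvpos : (0 : ℝ) < v := by linarith
  have hxinv : (0 : ℝ) < 1 / x := by positivity
  have hyinv : (0 : ℝ) < 1 / y := by positivity
  have hxinv1 : 1 / x ≤ 1 := by rw [div_le_one hxpos]; linarith
  have hyinv1 : 1 / y ≤ 1 := by rw [div_le_one hypos]; linarith
  have hvgt : (b 0 : ℝ) < v := by rw [hrec1]; linarith
  have hvle : v ≤ (b 0 : ℝ) + 1 := by rw [hrec1]; linarith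
  have hb0_cases : b 0 = 2 ∨ b 0 = 3 := by
    have hlb : (1 : ℝ) < (b 0 : ℝ) := by nlinarith
    have hub : (b 0 : ℝ) < 4 := by nlinarith
    have h1 : 1 < b 0 := by exact_mod_cast hlb
    have h2 : b 0 < 4 := by exact_mod_cast hub
    omega
  rcases hb0_cases with hb0 | hb0
  · -- b 0 = 2, value is 1 + √3
    left
    rw [hb0] at hrec1
    push_cast at hrec1
    -- hrec1 : v = 2 + 1/x
    have h1x : Real.sqrt 3 - 1 ≤ 1 / x := by linarith
    have hx1mul : x * (Real.sqrt 3 - 1) ≤ 1 := by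
      have h := mul_le_mul_of_nonneg_left h1x (le_of_lt hxpos)
      rw [mul_one_div, div_self (ne_of_gt hxpos)] at h
      linarith
    have hxub : x ≤ (Real.sqrt 3 + 1) / 2 := by nlinarith [hx1mul, hs3, hs3_1]
    have hb1lt : (b 1 : ℝ) < x := by rw [hrec2]; linarith
    have hb1lt2 : (b 1 : ℝ) < 2 := by nlinarith
    have hb1eq : b 1 = 1 := by
      have h2 : b 1 < 2 := by exact_mod_cast hb1lt2
      have := hb 1
      omega
    rw [hb1eq] at hrec2
    push_cast at hrec2
    -- hrec2 : x = 1 + 1/y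
    have e1 : x * y = y + 1 := by
      rw [hrec2, add_mul, one_mul, one_div, inv_mul_cancel₀ (ne_of_gt hypos)]
    have e2 : v * x = 2 * x + 1 := by
      rw [hrec1, add_mul, one_div, inv_mul_cancel₀ (ne_of_gt hxpos)]
    have e3 : v * x * y = 2 * x * y + y := by
      have : v * x * y = (2 * x + 1) * y := by rw [e2]
      linarith [this]
    have e4 : v * (y + 1) = 3 * y + 2 := by linear_combination e3 - (v - 2) * e1
    have hv3 : v ≤ 3 := by linarith
    have hkey : y * (3 - v) ≤ v * (3 - v) :=
      mul_le_mul_of_nonneg_right hyv (by linarith)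
    have hquad : v * v ≤ 2 * v + 2 := by nlinarith [e4, hkey]
    have hvub : v ≤ 1 + Real.sqrt 3 := by nlinarith [hquad, hs3, hs3_1, hlow]
    linarith
  · -- b 0 = 3, value is (3 + √13)/2
    right
    rw [hb0] at hrec1
    push_cast at hrec1
    -- hrec1 : v = 3 + 1/x
    have hvx : 1 / v ≤ 1 / x := one_div_le_one_div_of_le hxpos hxv
    have hge : 3 + 1 / v ≤ v := by linarith
    have hq : 3 * v + 1 ≤ v * v := by
      have h := mul_le_mul_of_nonneg_right hge (le_of_lt hvpos)
      rw [add_mul, one_div_mul_cancel (ne_of_gt hvpos)] at h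
      nlinarith [h]
    have hv3 : (3 : ℝ) < v := by rw [hrec1]; linarith
    have hvlb : (3 + Real.sqrt 13) / 2 ≤ v := by nlinarith [hq, hs13, hs13_3, hv3]
    linarith
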